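/- Let λ ∈ ℤⁿ and let S = ⋃_{s=a}^{b} ({s} × [f_s..l_s]) ⊆ [1..n] × ℤ be a snake-shaped set (a ≤ b, f_{s+1} ≤ f_s ≤ l_{s+1} ≤ l_s for a ≤ s < b, and f_s ≥ l_{s+2} for a ≤ s ≤ b−2). Suppose x, y ∈ S with x <̇ y (componentwise strict order). Then x and y belong to adjacent columns, say x = (t,u) and y = (t+1,v), and the falling factorial (λ_t − λ_{t+1})^{\underline{l_{t+1} − f_t}} is divisible by dist_λ(x,y), where dist_λ((x₁,x₂),(y₁,y₂)) := y₁ − x₁ + λ_{x₁} − λ_{y₁} + x₂ − y₂. -/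

import Mathlib

/-!
The right ends `l_s` decrease along the snake, so for columns `t + 2 ≤ s` every point of
column `s` lies weakly below `l_{t+2} ≤ f_t`, i.e. below every point of column `t`; hence
comparable points sit in adjacent columns `t, t + 1`. For `x = (t, u)`, `y = (t + 1, v)` the
distance is `λ_t − λ_{t+1} − (v − u − 1)` with `0 ≤ v − u − 1 < l_{t+1} − f_t`, which is one of
the factors of the falling factorial.
-/

open Finset

/-- `⋃_{s=a}^{b} {s} × [f_s..l_s]`, as a subset of `ℤ × ℤ`. -/
def columnSet (a b : ℤ) (f l : ℤ → ℤ) : Set (ℤ × ℤ) :=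
  {p | a ≤ p.1 ∧ p.1 ≤ b ∧ f p.1 ≤ p.2 ∧ p.2 ≤ l p.1}

section Snake

variable {a b : ℤ} {f l : ℤ → ℤ}

theorem antitoneOn_Icc_of_succ_le (h : ∀ s, a ≤ s → s ≤ b - 1 → l (s + 1) ≤ l s) :
    AntitoneOn l (Set.Icc a b) :=
  antitoneOn_of_add_one_le Set.ordConnected_Icc fun s _ hs hs1 =>
    h s hs.1 (by linarith [hs1.2])

theorem columnSet.fst_eq_add_one_of_lt (hl : AntitoneOn l (Set.Icc a b))
    (hshape : ∀ s, a ≤ s → s ≤ b - 2 → l (s + 2) ≤ f s) {x y : ℤ × ℤ}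
    (hx : x ∈ columnSet a b f l) (hy : y ∈ columnSet a b f l)
    (hlt : x.1 < y.1 ∧ x.2 < y.2) : y.1 = x.1 + 1 := by
  obtain ⟨hxa, -, hxf, -⟩ := hx
  obtain ⟨-, hyb, -, hyl⟩ := hy
  by_contra hne
  have hfar : x.1 + 2 ≤ y.1 := by omega
  have : y.2 ≤ x.2 :=
    calc y.2 ≤ l y.1 := hyl
      _ ≤ l (x.1 + 2) := hl ⟨by omega, by omega⟩ ⟨by omega, hyb⟩ hfar
      _ ≤ f x.1 := hshape x.1 hxa (by omega)
      _ ≤ x.2 := hxf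
  omega

end Snake

theorem stmt_8_general (lam : ℤ → ℤ) (a b : ℤ) (f l : ℤ → ℤ)
    (S : Set (ℤ × ℤ))
    (hS : S = {p : ℤ × ℤ | a ≤ p.1 ∧ p.1 ≤ b ∧ f p.1 ≤ p.2 ∧ p.2 ≤ l p.1})
    (hshape1 : ∀ s : ℤ, a ≤ s → s ≤ b - 1 →
      f (s + 1) ≤ f s ∧ f s ≤ l (s + 1) ∧ l (s + 1) ≤ l s)
    (hshape2 : ∀ s : ℤ, a ≤ s → s ≤ b - 2 → l (s + 2) ≤ f s)
    (x y : ℤ × ℤ) (hx : x ∈ S) (hy : y ∈ S)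
    (hlt : x.1 < y.1 ∧ x.2 < y.2) :
    y.1 = x.1 + 1 ∧
      (y.1 - x.1 + lam x.1 - lam y.1 + x.2 - y.2) ∣
        ∏ j ∈ Finset.range (l (x.1 + 1) - f x.1).toNat,
          (lam x.1 - lam (x.1 + 1) - (j : ℤ)) := by
  change S = columnSet a b f l at hS
  subst hS
  have hcol : y.1 = x.1 + 1 := columnSet.fst_eq_add_one_of_lt
    (antitoneOn_Icc_of_succ_le fun s hs hsb => (hshape1 s hs hsb).2.2) hshape2 hx hy hlt
  refine ⟨hcol, ?_⟩
  have hj : (y.2 - x.2 - 1).toNat < (l (x.1 + 1) - f x.1).toNat := by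
    have hxf : f x.1 ≤ x.2 := hx.2.2.1
    have hyl : y.2 ≤ l (x.1 + 1) := hcol ▸ hy.2.2.2
    omega
  have hdist : y.1 - x.1 + lam x.1 - lam y.1 + x.2 - y.2 =
      lam x.1 - lam (x.1 + 1) - ((y.2 - x.2 - 1).toNat : ℤ) := by
    rw [hcol]
    omega
  rw [hdist]
  exact dvd_prod_of_mem _ (mem_range.2 hj)

/-- Lemma: comparable points of a snake-shaped set lie in adjacent columns, and
the falling factorial `(λ_t − λ_{t+1})^{\underline{l_{t+1} − f_t}}` is
divisible by `dist_λ(x,y) = y₁ − x₁ + λ_{x₁} − λ_{y₁} + x₂ − y₂`. -/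
theorem stmt_8 (n : ℕ) (lam : ℤ → ℤ) (a b : ℤ) (ha : 1 ≤ a) (hb : b ≤ (n : ℤ))
    (hab : a ≤ b) (f l : ℤ → ℤ)
    (S : Set (ℤ × ℤ))
    (hS : S = {p : ℤ × ℤ | a ≤ p.1 ∧ p.1 ≤ b ∧ f p.1 ≤ p.2 ∧ p.2 ≤ l p.1})
    (hSne : S.Nonempty)
    (hshape1 : ∀ s : ℤ, a ≤ s → s ≤ b - 1 →
      f (s + 1) ≤ f s ∧ f s ≤ l (s + 1) ∧ l (s + 1) ≤ l s)
    (hshape2 : ∀ s : ℤ, a ≤ s → s ≤ b - 2 → l (s + 2) ≤ f s)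
    (x y : ℤ × ℤ) (hx : x ∈ S) (hy : y ∈ S)
    (hlt : x.1 < y.1 ∧ x.2 < y.2) :
    y.1 = x.1 + 1 ∧
      (y.1 - x.1 + lam x.1 - lam y.1 + x.2 - y.2) ∣
        ∏ j ∈ Finset.range (l (x.1 + 1) - f x.1).toNat,
          (lam x.1 - lam (x.1 + 1) - (j : ℤ)) :=
  stmt_8_general lam a b f l S hS hshape1 hshape2 x y hx hy hlt
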